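/- arXiv:1906.08618 — 2 statements merged into one kernel-verified Lean document; each statement's English description precedes it below -/
import Mathlib

section
/- If x : ℝ → V is a C¹ curve in a finite-dimensional inner product space satisfying dx/ds = x(s) − b(s) with ‖b(s)‖ ≤ C for all s, and ‖x(s)‖ is bounded on ℝ, then ‖x(s)‖ ≤ C for all s ∈ ℝ. -/
/-! Multiplying by `e^{-s}` turns the equation into `(e^{-s} x)' = -e^{-s} b`, whose right-hand
side has norm at most `C e^{-s}`. By the mean value inequality `e^{-s} (‖x s‖ - C)` is then
nondecreasing; as `x` is bounded it is also at most `e^{-s} (B - C) → 0`, hence nonpositive. -/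

open Real Filter Topology

theorem norm_sub_le_sub_of_norm_hasDerivAt_le {E : Type*} [NormedAddCommGroup E] [NormedSpace ℝ E]
    {f f' : ℝ → E} {g g' : ℝ → ℝ} (hf : ∀ t, HasDerivAt f (f' t) t)
    (hg : ∀ t, HasDerivAt g (g' t) t) (bound : ∀ t, ‖f' t‖ ≤ g' t) {a b : ℝ} (hab : a ≤ b) :
    ‖f b - f a‖ ≤ g b - g a := by
  refine image_norm_le_of_norm_deriv_right_le_deriv_boundary (f := fun t => f t - f a)
    (B := fun t => g t - g a) ?_ (fun t _ => ((hf t).sub_const (f a)).hasDerivWithinAt) (by simp)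
    (fun t => (hg t).sub_const (g a)) (fun t _ => bound t) ⟨hab, le_rfl⟩
  exact fun t _ => ((hf t).continuousAt.sub continuousAt_const).continuousWithinAt

theorem Real.hasDerivAt_exp_neg (t : ℝ) : HasDerivAt (fun u => exp (-u)) (-exp (-t)) t := by
  simpa using (hasDerivAt_neg t).exp

section

variable {E : Type*} [NormedAddCommGroup E] [NormedSpace ℝ E] {x b : ℝ → E}

theorem hasDerivAt_exp_neg_smul_of_hasDerivAt_sub {t : ℝ} (hx : HasDerivAt x (x t - b t) t) :
    HasDerivAt (fun u => exp (-u) • x u) (-(exp (-t) • b t)) t := by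
  convert (hasDerivAt_exp_neg t).smul hx using 1
  · rfl
  rw [smul_sub, neg_smul]
  abel

theorem monotone_exp_neg_mul_norm_sub_of_hasDerivAt_sub {C : ℝ}
    (hx : ∀ t, HasDerivAt x (x t - b t) t) (hbC : ∀ t, ‖b t‖ ≤ C) :
    Monotone fun t => exp (-t) * (‖x t‖ - C) := by
  intro s t hst
  have hdrift : ‖exp (-t) • x t - exp (-s) • x s‖ ≤ -C * exp (-t) - -C * exp (-s) :=
    norm_sub_le_sub_of_norm_hasDerivAt_le
      (fun u => hasDerivAt_exp_neg_smul_of_hasDerivAt_sub (hx u))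
      (fun u => (hasDerivAt_exp_neg u).const_mul (-C))
      (fun u => by
        rw [norm_neg, norm_smul, norm_of_nonneg (exp_pos _).le]
        nlinarith [hbC u, exp_pos (-u)])
      hst
  have hnorm (u : ℝ) : ‖exp (-u) • x u‖ = exp (-u) * ‖x u‖ := by
    rw [norm_smul, norm_of_nonneg (exp_pos _).le]
  have hreverse := norm_sub_norm_le (exp (-s) • x s) (exp (-t) • x t)
  rw [norm_sub_rev, hnorm, hnorm] at hreverse
  dsimp only
  linarith

end

theorem bounded_solution_of_linear_ode_confined_general
    {V : Type*} [NormedAddCommGroup V] [InnerProductSpace ℝ V]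
    (C : ℝ) (b : ℝ → V) (hbC : ∀ s, ‖b s‖ ≤ C)
    (x : ℝ → V) (hx : ∀ s, HasDerivAt x (x s - b s) s)
    (hbd : ∃ B : ℝ, ∀ s, ‖x s‖ ≤ B) :
    ∀ s, ‖x s‖ ≤ C := by
  obtain ⟨B, hB⟩ := hbd
  intro s
  have hmono := monotone_exp_neg_mul_norm_sub_of_hasDerivAt_sub hx hbC
  have hdecay : Tendsto (fun t => exp (-t) * (B - C)) atTop (𝓝 0) := by
    simpa using tendsto_exp_neg_atTop_nhds_zero.mul_const (B - C)
  have hle : exp (-s) * (‖x s‖ - C) ≤ 0 :=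
    ge_of_tendsto hdecay <| (eventually_ge_atTop s).mono fun t hst =>
      (hmono hst).trans <| mul_le_mul_of_nonneg_left (by linarith [hB t]) (exp_pos _).le
  linarith [nonpos_of_mul_nonpos_right hle (exp_pos _)]

theorem bounded_solution_of_linear_ode_confined
    {V : Type*} [NormedAddCommGroup V] [InnerProductSpace ℝ V]
    [FiniteDimensional ℝ V]
    (C : ℝ) (hC : 0 ≤ C) (b : ℝ → V) (hb : Continuous b) (hbC : ∀ s, ‖b s‖ ≤ C)
    (x : ℝ → V) (hx : ∀ s, HasDerivAt x (x s - b s) s)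
    (hbd : ∃ B : ℝ, ∀ s, ‖x s‖ ≤ B) :
    ∀ s, ‖x s‖ ≤ C :=
  bounded_solution_of_linear_ode_confined_general C b hbC x hx hbd
end

section
/- Let f : E → ℝ be a smooth function on a Hilbert space, E = Z ⊕ Y an orthogonal splitting with projection P onto Z, and suppose φ : Z → Y is a smooth map with (1−P)∇f(z + φ(z)) = 0 for all z ∈ Z. Define g : Z → ℝ by g(z) = f(z + φ(z)). Then ∇g(z) = P∇f(z + φ(z)); in particular z is a critical point of g if and only if z + φ(z) is a critical point of f. -/
/-!
By the chain rule, `Dg(z) w = ⟪∇f(x), w + φ'(z) w⟫` with `x = z + φ(z)`. The hypothesis on `φ`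
says that `∇f(x)` lies in `Z`, while `φ'(z) w` lies in `Zᗮ`, so the second term vanishes and
`∇g(z) = P ∇f(x) = ∇f(x)`.
-/

open Submodule

namespace Submodule

variable {E : Type*} [NormedAddCommGroup E] [InnerProductSpace ℝ E] {K : Submodule ℝ E}

theorem orthogonalProjectionOnto_of_mem [K.HasOrthogonalProjection] {v : E} (hv : v ∈ K) :
    K.orthogonalProjectionOnto v = ⟨v, hv⟩ :=
  orthogonalProjectionOnto_mem_subspace_eq_self ⟨v, hv⟩

theorem orthogonalProjectionOnto_eq_zero_iff_of_mem [K.HasOrthogonalProjection] {v : E}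
    (hv : v ∈ K) : K.orthogonalProjectionOnto v = 0 ↔ v = 0 := by
  rw [orthogonalProjectionOnto_of_mem hv, mk_eq_zero]

theorem mem_of_orthogonalProjectionOnto_orthogonal_eq_zero [K.HasOrthogonalProjection] {v : E}
    (h : Kᗮ.orthogonalProjectionOnto v = 0) : v ∈ K :=
  K.orthogonal_orthogonal ▸ orthogonalProjectionOnto_eq_zero_iff.mp h

end Submodule

theorem HasGradientAt.comp_add_orthogonal {E : Type*} [NormedAddCommGroup E]
    [InnerProductSpace ℝ E] [CompleteSpace E] {K : Submodule ℝ E} [CompleteSpace K]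
    {f : E → ℝ} {v : E} {φ : K → Kᗮ} {z : K}
    (hf : HasGradientAt f v (z + φ z)) (hv : v ∈ K) (hφ : DifferentiableAt ℝ φ z) :
    HasGradientAt (fun w : K => f (w + φ w)) (K.orthogonalProjectionOnto v) z := by
  rw [hasGradientAt_iff_hasFDerivAt]
  refine (hf.hasFDerivAt.comp z <| K.subtypeL.hasFDerivAt.add <|
    Kᗮ.subtypeL.hasFDerivAt.comp z hφ.hasFDerivAt).congr_fderiv ?_
  ext w
  have hφw : inner ℝ v (fderiv ℝ φ z w : E) = 0 :=
    inner_right_of_mem_orthogonal hv (fderiv ℝ φ z w).2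
  simp [hφw, orthogonalProjectionOnto_of_mem hv]

theorem saddle_point_reduction_gradient
    {E : Type*} [NormedAddCommGroup E] [InnerProductSpace ℝ E] [CompleteSpace E]
    (Z : Submodule ℝ E) [CompleteSpace Z]
    (f : E → ℝ) (hf : ContDiff ℝ 1 f)
    (φ : Z → Zᗮ) (hφ : ContDiff ℝ 1 φ)
    (hsolve : ∀ z : Z, Submodule.orthogonalProjectionOnto Zᗮ (gradient f (↑z + ↑(φ z))) = 0) :
    let g : Z → ℝ := fun z => f (↑z + ↑(φ z))
    (∀ z : Z, gradient g z = Submodule.orthogonalProjectionOnto Z (gradient f (↑z + ↑(φ z)))) ∧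
    (∀ z : Z, gradient g z = 0 ↔ gradient f (↑z + ↑(φ z)) = 0) := by
  intro g
  have hmem (z : Z) : gradient f (z + φ z) ∈ Z :=
    mem_of_orthogonalProjectionOnto_orthogonal_eq_zero (hsolve z)
  have hg (z : Z) : HasGradientAt g (Z.orthogonalProjectionOnto (gradient f (z + φ z))) z :=
    (hf.differentiable one_ne_zero _).hasGradientAt.comp_add_orthogonal (hmem z)
      (hφ.differentiable one_ne_zero z)
  refine ⟨fun z => (hg z).gradient, fun z => ?_⟩
  rw [(hg z).gradient, orthogonalProjectionOnto_eq_zero_iff_of_mem (hmem z)]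
end
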